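/- Let (E, L, E) be a labeled space with E the smallest non-degenerate accommodating set. If S(H(A)) = E for every nonempty A ∈ E (where S(H(A)) is the smallest hereditary saturated set containing A), then: (E, L, E) is strongly cofinal, and for every nonempty A ∈ E and every B ∈ E there exists C ∈ E_reg such that B \ C ∈ H(A). -/

import Mathlib

universe u v

variable {V : Type u} {Λ : Type v}

/-- The relative range `r(S, α)` of a set of vertices along a labeled path. -/
def relRange (Edge : V → Λ → V → Prop) : Set V → List Λ → Set V
  | S, [] => S
  | S, a :: α => relRange Edge {w | ∃ u ∈ S, Edge u a w} α

/-- The range `r(α)` of a labeled path. -/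
def lrange (Edge : V → Λ → V → Prop) (α : List Λ) : Set V :=
  relRange Edge Set.univ α

/-- `α` is a (nonempty) labeled path of the labeled graph. -/
def IsLP (Edge : V → Λ → V → Prop) (α : List Λ) : Prop :=
  α ≠ [] ∧ (lrange Edge α).Nonempty

/-- `L(SE¹)`: labels of edges emitted from `S`. -/
def edgeLabels (Edge : V → Λ → V → Prop) (S : Set V) : Set Λ :=
  {a | ∃ u ∈ S, ∃ w, Edge u a w}

/-- `S` is regular: every nonempty `B ∈ ℬ` with `B ⊆ S` emits a finite nonzero set of labels. -/
def RegularSet (Edge : V → Λ → V → Prop) (ℬ : Set (Set V)) (S : Set V) : Prop :=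
  ∀ B ∈ ℬ, B ⊆ S → B.Nonempty →
    (edgeLabels Edge B).Finite ∧ (edgeLabels Edge B).Nonempty

/-- `H ⊆ ℬ` is hereditary. -/
def Hered (Edge : V → Λ → V → Prop) (ℬ H : Set (Set V)) : Prop :=
  H ⊆ ℬ ∧ (∀ A ∈ H, ∀ α : List Λ, IsLP Edge α → relRange Edge A α ∈ H) ∧
    (∀ A ∈ H, ∀ B ∈ H, A ∪ B ∈ H) ∧ (∀ A ∈ H, ∀ B ∈ ℬ, B ⊆ A → B ∈ H)

/-- `H` is saturated. -/
def Satur (Edge : V → Λ → V → Prop) (ℬ H : Set (Set V)) : Prop :=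
  ∀ A ∈ ℬ, RegularSet Edge ℬ A →
    (∀ α : List Λ, IsLP Edge α → relRange Edge A α ∈ H) → A ∈ H

/-- `H(A)`: sets covered by finitely many relative ranges `r(A, αᵢ)`, `αᵢ ∈ L^#(E)`. -/
def HSet (Edge : V → Λ → V → Prop) (ℬ : Set (Set V)) (A : Set V) : Set (Set V) :=
  {B ∈ ℬ | ∃ l : List (List Λ), (∀ α ∈ l, α = [] ∨ IsLP Edge α) ∧
    B ⊆ ⋃ α ∈ l, relRange Edge A α}

/-- `S(H(A))`: the saturation of `H(A)`. -/
def SHSet (Edge : V → Λ → V → Prop) (ℬ : Set (Set V)) (A : Set V) : Set (Set V) :=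
  {B ∈ ℬ | ∃ n : ℕ,
    (∀ β : List Λ, (β = [] ∨ IsLP Edge β) → β.length = n →
      relRange Edge B β ∈ HSet Edge ℬ A) ∧
    (∀ γ : List Λ, (γ = [] ∨ IsLP Edge γ) → γ.length < n →
      ∃ C ∈ HSet Edge ℬ A, ∃ D ∈ ℬ, RegularSet Edge ℬ D ∧ relRange Edge B γ = C ∪ D)}

/-- `ℬ` is an accommodating set for the labeled graph. -/
def Accommodating (Edge : V → Λ → V → Prop) (ℬ : Set (Set V)) : Prop :=
  (∀ α : List Λ, IsLP Edge α → lrange Edge α ∈ ℬ) ∧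
    (∀ A ∈ ℬ, ∀ α : List Λ, IsLP Edge α → relRange Edge A α ∈ ℬ) ∧
    (∀ A ∈ ℬ, ∀ B ∈ ℬ, A ∪ B ∈ ℬ) ∧ (∀ A ∈ ℬ, ∀ B ∈ ℬ, A ∩ B ∈ ℬ)

/-- `ℬ` is non-degenerate: closed under relative complements (and contains `∅`). -/
def NonDegenerate (ℬ : Set (Set V)) : Prop :=
  (∅ : Set V) ∈ ℬ ∧ ∀ A ∈ ℬ, ∀ B ∈ ℬ, A \ B ∈ ℬ

/-- The labeled space is weakly left-resolving. -/
def WLR (Edge : V → Λ → V → Prop) (ℬ : Set (Set V)) : Prop :=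
  ∀ A ∈ ℬ, ∀ B ∈ ℬ, ∀ α : List Λ, IsLP Edge α →
    relRange Edge (A ∩ B) α = relRange Edge A α ∩ relRange Edge B α

/-- `ℬ` is the smallest non-degenerate accommodating set. -/
def SmallestAccom (Edge : V → Λ → V → Prop) (ℬ : Set (Set V)) : Prop :=
  Accommodating Edge ℬ ∧ NonDegenerate ℬ ∧
    ∀ ℬ' : Set (Set V), Accommodating Edge ℬ' → NonDegenerate ℬ' → ℬ ⊆ ℬ'

/-- `x_{[1,n]}`: the length-`n` prefix of an infinite word. -/
def wordPrefix (x : ℕ → Λ) (n : ℕ) : List Λ := List.ofFn fun i : Fin n => x i.val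

/-- `x` lies in the closure of `L(E^∞)`: all finite prefixes are labeled paths. -/
def InfWord (Edge : V → Λ → V → Prop) (x : ℕ → Λ) : Prop :=
  ∀ n : ℕ, 1 ≤ n → IsLP Edge (wordPrefix x n)

/-- Strong cofinality of a labeled space. -/
def StrCofinal (Edge : V → Λ → V → Prop) (ℬ : Set (Set V)) : Prop :=
  ∀ A ∈ ℬ, A.Nonempty → ∀ x : ℕ → Λ, InfWord Edge x →
    ∃ N : ℕ, 1 ≤ N ∧ ∃ l : List (List Λ), (∀ α ∈ l, IsLP Edge α) ∧
      lrange Edge (wordPrefix x N) ⊆ ⋃ α ∈ l, relRange Edge A α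

/-- Minimality: the only hereditary saturated subsets of `ℬ` are `{∅}` and `ℬ`. -/
def MinimalLS (Edge : V → Λ → V → Prop) (ℬ : Set (Set V)) : Prop :=
  ∀ H : Set (Set V), Hered Edge ℬ H → Satur Edge ℬ H → H ⊆ {∅} ∨ H = ℬ

/-- `L(SEⁿ)`: labels of paths of length `n` with source in `S`. -/
def labelsOfLen (Edge : V → Λ → V → Prop) (S : Set V) (n : ℕ) : Set (List Λ) :=
  {β | β.length = n ∧ (relRange Edge S β).Nonempty}

/-- The labeled space is disagreeable. -/
def Disagreeable (Edge : V → Λ → V → Prop) (ℬ : Set (Set V)) : Prop :=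
  ∀ A ∈ ℬ, A.Nonempty → ∀ β : List Λ, IsLP Edge β →
    ∃ n : ℕ, 1 ≤ n ∧ labelsOfLen Edge A (β.length * n) ≠ {(List.replicate n β).flatten}

/-- `(α, A)` is a cycle. -/
def IsCycle (Edge : V → Λ → V → Prop) (ℬ : Set (Set V)) (α : List Λ) (A : Set V) : Prop :=
  IsLP Edge α ∧ A ∈ ℬ ∧ A.Nonempty ∧ ∀ B ∈ ℬ, B ⊆ A → relRange Edge B α = B

/-- The cycle `(α, A)` has an exit. -/
def CycleHasExit (Edge : V → Λ → V → Prop) (ℬ : Set (Set V)) (α : List Λ) (A : Set V) : Prop :=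
  ∃ t : ℕ, 1 ≤ t ∧ t ≤ α.length ∧ ∃ B ∈ ℬ, B.Nonempty ∧
    B ⊆ relRange Edge A (α.take t) ∧
    edgeLabels Edge B ≠ {a : Λ | α[t % α.length]? = some a}

/-- The cycle `(α, A)` has no exits. -/
def CycleNoExit (Edge : V → Λ → V → Prop) (ℬ : Set (Set V)) (α : List Λ) (A : Set V) : Prop :=
  ∀ t : ℕ, 1 ≤ t → t ≤ α.length → ∀ B ∈ ℬ, B.Nonempty →
    B ⊆ relRange Edge A (α.take t) →
    RegularSet Edge ℬ B ∧ edgeLabels Edge B = {a : Λ | α[t % α.length]? = some a}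

/-- Condition (L): every cycle has an exit. -/
def CondL (Edge : V → Λ → V → Prop) (ℬ : Set (Set V)) : Prop :=
  ∀ (α : List Λ) (A : Set V), IsCycle Edge ℬ α A → CycleHasExit Edge ℬ α A

/-- `α` is a loop at `A`. -/
def IsLoop (Edge : V → Λ → V → Prop) (α : List Λ) (A : Set V) : Prop :=
  IsLP Edge α ∧ A ⊆ relRange Edge A α

/-- The loop `(α, A)` has an exit. -/
def LoopHasExit (Edge : V → Λ → V → Prop) (α : List Λ) (A : Set V) : Prop :=
  {β : List Λ | ∃ k : ℕ, 1 ≤ k ∧ k ≤ α.length ∧ β = α.take k} ⊂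
      {β : List Λ | 1 ≤ β.length ∧ β.length ≤ α.length ∧ (relRange Edge A β).Nonempty} ∨
    A ⊂ relRange Edge A α

/-- `β` is an irreducible path: not a repetition of a proper initial path. -/
def IrreduciblePath (β : List Λ) : Prop :=
  ∀ k : ℕ, 1 ≤ k → k < β.length → ∀ m : ℕ, β ≠ (List.replicate m (β.take k)).flatten

/-- The generalized vertex `[v]_l`. -/
def gvClass (Edge : V → Λ → V → Prop) (l : ℕ) (v : V) : Set V :=
  {w | ∀ β : List Λ, 1 ≤ β.length → β.length ≤ l → (v ∈ lrange Edge β ↔ w ∈ lrange Edge β)}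

/-- `s(x)`: sources of infinite paths labeled by `x`. -/
def srcInf (Edge : V → Λ → V → Prop) (x : ℕ → Λ) : Set V :=
  {w | ∃ p : ℕ → V, p 0 = w ∧ ∀ n : ℕ, Edge (p n) (x n) (p (n + 1))}

/-!
Every `B ∈ ℰ` lies in `S(H(A))` at some depth `n`. For `n = 0` this says `B ∈ H(A)`; for `n > 0`
the condition at the empty path writes `B = C ∪ D` with `C ∈ H(A)` and `D` regular, so
`B \ D ⊆ C`. For strong cofinality take `B = r(x_{[1,1]})`: then `r(x_{[1,1+n]}) ∈ H(A)` is
covered by finitely many `r(A, αᵢ)`, and one more letter of `x` turns the `αᵢ`, which may be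
empty, into labeled paths.
-/

section LabeledSpace

variable (Edge : V → Λ → V → Prop)

theorem relRange_append (S : Set V) (α β : List Λ) :
    relRange Edge S (α ++ β) = relRange Edge (relRange Edge S α) β := by
  induction α generalizing S with
  | nil => rfl
  | cons a α ih => exact ih _

theorem relRange_mono {S T : Set V} (h : S ⊆ T) (α : List Λ) :
    relRange Edge S α ⊆ relRange Edge T α := by
  induction α generalizing S T with
  | nil => exact h
  | cons a α ih => exact ih fun w ⟨u, hu, he⟩ => ⟨u, h hu, he⟩

theorem relRange_subset_lrange (S : Set V) (α : List Λ) :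
    relRange Edge S α ⊆ lrange Edge α :=
  relRange_mono Edge (Set.subset_univ S) α

theorem relRange_iUnion {ι : Sort*} (S : ι → Set V) (γ : List Λ) :
    relRange Edge (⋃ i, S i) γ = ⋃ i, relRange Edge (S i) γ := by
  induction γ generalizing S with
  | nil => rfl
  | cons a γ ih =>
    have hstep :
        {w | ∃ u ∈ ⋃ i, S i, Edge u a w} = ⋃ i, {w | ∃ u ∈ S i, Edge u a w} := by
      ext w
      simp only [Set.mem_iUnion, Set.mem_ofPred_eq]
      exact ⟨fun ⟨u, ⟨i, hu⟩, he⟩ => ⟨i, u, hu, he⟩,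
        fun ⟨i, u, hu, he⟩ => ⟨u, ⟨i, hu⟩, he⟩⟩
    simp only [relRange, hstep]
    exact ih _

theorem relRange_subset_biUnion_append {A B : Set V} {l : List (List Λ)}
    (hB : B ⊆ ⋃ α ∈ l, relRange Edge A α) (γ : List Λ) :
    relRange Edge B γ ⊆ ⋃ α ∈ l, relRange Edge A (α ++ γ) := by
  refine (relRange_mono Edge hB γ).trans_eq ?_
  simp only [relRange_iUnion, relRange_append]

theorem isLP_of_relRange_nonempty {S : Set V} {α : List Λ} (hα : α ≠ [])
    (h : (relRange Edge S α).Nonempty) : IsLP Edge α :=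
  ⟨hα, h.mono (relRange_subset_lrange Edge S α)⟩

open Classical in
theorem exists_isLP_cover_relRange {A B : Set V} {l : List (List Λ)}
    (hB : B ⊆ ⋃ α ∈ l, relRange Edge A α) {γ : List Λ} (hγ : γ ≠ []) :
    ∃ l' : List (List Λ), (∀ α ∈ l', IsLP Edge α) ∧
      relRange Edge B γ ⊆ ⋃ α ∈ l', relRange Edge A α := by
  refine ⟨(l.map (· ++ γ)).filter fun α => (relRange Edge A α).Nonempty, ?_, ?_⟩
  · intro α hα
    obtain ⟨hmap, hne⟩ := List.mem_filter.mp hα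
    obtain ⟨β, -, rfl⟩ := List.mem_map.mp hmap
    exact isLP_of_relRange_nonempty Edge (List.append_ne_nil_of_right_ne_nil β hγ)
      (of_decide_eq_true hne)
  · intro w hw
    obtain ⟨β, hβ, hwβ⟩ :=
      Set.mem_iUnion₂.mp (relRange_subset_biUnion_append Edge hB γ hw)
    exact Set.mem_iUnion₂.mpr ⟨β ++ γ,
      List.mem_filter.mpr ⟨List.mem_map_of_mem hβ, decide_eq_true ⟨w, hwβ⟩⟩, hwβ⟩

theorem lrange_wordPrefix_add (x : ℕ → Λ) (m n : ℕ) :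
    lrange Edge (wordPrefix x (m + n)) =
      relRange Edge (lrange Edge (wordPrefix x m)) (List.ofFn fun i : Fin n => x (m + i)) := by
  rw [lrange, wordPrefix, List.ofFn_add, relRange_append]
  rfl

variable {Edge} {ℬ : Set (Set V)}

theorem regularSet_empty : RegularSet Edge ℬ ∅ :=
  fun _ _ hB hne => absurd (Set.subset_empty_iff.mp hB) hne.ne_empty

theorem mem_HSet_of_subset {A B C : Set V} (hC : C ∈ HSet Edge ℬ A) (hB : B ∈ ℬ)
    (hBC : B ⊆ C) : B ∈ HSet Edge ℬ A :=
  let ⟨_, l, hl, hcov⟩ := hC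
  ⟨hB, l, hl, hBC.trans hcov⟩

theorem exists_regularSet_sdiff_mem_HSet (hND : NonDegenerate ℬ) {A B : Set V}
    (hB : B ∈ SHSet Edge ℬ A) :
    ∃ C ∈ ℬ, RegularSet Edge ℬ C ∧ B \ C ∈ HSet Edge ℬ A := by
  obtain ⟨hBℬ, n, hdepth, hsplit⟩ := hB
  rcases Nat.eq_zero_or_pos n with rfl | hn
  · exact ⟨∅, hND.1, regularSet_empty, by
      rw [Set.sdiff_empty]; exact hdepth [] (Or.inl rfl) rfl⟩
  · obtain ⟨C, hC, D, hD, hDreg, hBCD⟩ := hsplit [] (Or.inl rfl) hn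
    refine ⟨D, hD, hDreg, mem_HSet_of_subset hC (hND.2 B hBℬ D hD) ?_⟩
    rw [show B = C ∪ D from hBCD, Set.union_sdiff_right]
    exact Set.sdiff_subset

theorem exists_wordPrefix_cover_of_mem_SHSet {A : Set V} {x : ℕ → Λ} (hx : InfWord Edge x)
    {m : ℕ} (hm : 1 ≤ m) (hxm : lrange Edge (wordPrefix x m) ∈ SHSet Edge ℬ A) :
    ∃ N : ℕ, 1 ≤ N ∧ ∃ l : List (List Λ), (∀ α ∈ l, IsLP Edge α) ∧
      lrange Edge (wordPrefix x N) ⊆ ⋃ α ∈ l, relRange Edge A α := by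
  obtain ⟨-, n, hdepth, -⟩ := hxm
  set β := List.ofFn fun i : Fin n => x (m + i)
  have hrange :
      relRange Edge (lrange Edge (wordPrefix x m)) β = lrange Edge (wordPrefix x (m + n)) :=
    (lrange_wordPrefix_add Edge x m n).symm
  have hβ : β = [] ∨ IsLP Edge β :=
    (em _).imp_right fun hne =>
      isLP_of_relRange_nonempty Edge hne (hrange ▸ (hx (m + n) (by omega)).2)
  obtain ⟨-, l, -, hcov⟩ := hdepth β hβ List.length_ofFn
  rw [hrange] at hcov
  obtain ⟨l', hl', hcov'⟩ :=
    exists_isLP_cover_relRange Edge hcov (List.cons_ne_nil (x (m + n)) [])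
  refine ⟨m + n + 1, by omega, l', hl', ?_⟩
  rw [lrange_wordPrefix_add]
  simpa using hcov'

end LabeledSpace

theorem saturation_full_implies_cofinal_and_regular_general (Edge : V → Λ → V → Prop)
    (ℰ : Set (Set V)) (hsm : SmallestAccom Edge ℰ)
    (hfull : ∀ A ∈ ℰ, A.Nonempty → SHSet Edge ℰ A = ℰ) :
    StrCofinal Edge ℰ ∧
      ∀ A ∈ ℰ, A.Nonempty → ∀ B ∈ ℰ, ∃ C ∈ ℰ, RegularSet Edge ℰ C ∧
        B \ C ∈ HSet Edge ℰ A := by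
  obtain ⟨⟨hrange, -⟩, hND, -⟩ := hsm
  refine ⟨fun A hA hAne x hx => ?_, fun A hA hAne B hB => ?_⟩
  · have hx₁ : lrange Edge (wordPrefix x 1) ∈ SHSet Edge ℰ A :=
      (hfull A hA hAne).symm ▸ hrange _ (hx 1 le_rfl)
    exact exists_wordPrefix_cover_of_mem_SHSet hx le_rfl hx₁
  · exact exists_regularSet_sdiff_mem_HSet hND ((hfull A hA hAne).symm ▸ hB)

/-- if `S(H(A)) = ℰ` for every nonempty `A ∈ ℰ`, then the labeled space is
strongly cofinal and every `B ∈ ℰ` differs from an element of `H(A)` by a regular set. -/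
theorem saturation_full_implies_cofinal_and_regular (Edge : V → Λ → V → Prop)
    (ℰ : Set (Set V)) (hsm : SmallestAccom Edge ℰ) (hwlr : WLR Edge ℰ)
    (hfull : ∀ A ∈ ℰ, A.Nonempty → SHSet Edge ℰ A = ℰ) :
    StrCofinal Edge ℰ ∧
      ∀ A ∈ ℰ, A.Nonempty → ∀ B ∈ ℰ, ∃ C ∈ ℰ, RegularSet Edge ℰ C ∧
        B \ C ∈ HSet Edge ℰ A :=
  saturation_full_implies_cofinal_and_regular_general Edge ℰ hsm hfull
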